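/- Alg Lat ℳ(λ) consists exactly of those bounded operators A on ℓ²(V) with the property that for all f, g ∈ ℓ²(V): if ⟨M_φ̂ f, g⟩ = 0 for every φ̂ ∈ 𝓜₀(λ), then ⟨A f, g⟩ = 0. -/

import Mathlib

/-!
Sufficiency: if `K` is closed and `ℳ(λ)`-invariant, `f ∈ K` and `g ∈ Kᗮ`, then every
`⟪M_φ f, g⟫` vanishes, hence so does `⟪A f, g⟫`; thus `A f ∈ Kᗮᗮ = K`.

Necessity: for fixed `g`, the vectors `h` with `⟪S^k h, g⟫ = 0` for all `k` form a closed
subspace, which contains `f` because `S^k` is the multiplier with symbol `Pi.single k 1`.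
It is invariant under every `M_φ`, since `S^k M_φ` is again a multiplier and every multiplier `N`
satisfies `⟪N h, g⟫ = 0` there. The series `∑ φ(k) S^k` need not converge, so this is proved
with the depth rotation `U_θ e_v = e^{2πi|v|θ} e_v`: the continuous function
`θ ↦ ⟪N U_θ h, U_θ g⟫` has `k`-th Fourier coefficient `conj φ(k) ⟪S^k h, g⟫ = 0`, so it vanishes,
in particular at `θ = 0`. Hence `A f` lies in the subspace, and `k = 0` gives `⟪A f, g⟫ = 0`.
-/

open Filter Finset Classical

set_option linter.unusedVariables false
open scoped ComplexConjugate ENNReal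

noncomputable section
attribute [local instance] Classical.propDecidable

/-- A countably infinite rooted directed tree, encoded by the parent function
(with the convention `par root = root`) and the depth function `|·|`. -/
structure DirTree (V : Type*) where
  root : V
  par : V → V
  depth : V → ℕ
  par_root : par root = root
  depth_eq_zero : ∀ v, depth v = 0 ↔ v = root
  depth_par : ∀ v, v ≠ root → depth (par v) + 1 = depth v

variable {V : Type*}

/-- The tree is leafless: every vertex has a child. -/
def DirTree.Leafless (T : DirTree V) : Prop :=
  ∀ u : V, ∃ v : V, v ≠ T.root ∧ T.par v = u

/-- `wProd T lam v k = λ_{par^k(v)|v}`, the product of the weights along `k` steps up from `v`. -/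
def wProd (T : DirTree V) (lam : V → ℂ) (v : V) (k : ℕ) : ℂ :=
  ∏ n ∈ Finset.range k, lam (T.par^[n] v)

/-- `(Γ_φ f)(v) = ∑_{k=0}^{|v|} λ_{par^k(v)|v} φ(k) f(par^k(v))`. -/
def Gamma (T : DirTree V) (lam : V → ℂ) (φ : ℕ → ℂ) (f : V → ℂ) (v : V) : ℂ :=
  ∑ k ∈ Finset.range (T.depth v + 1), wProd T lam v k * φ k * f (T.par^[k] v)

/-- `S` is the weighted shift `S_λ` on `ℓ²(V)`. -/
def IsShift (T : DirTree V) (lam : V → ℝ)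
    (S : lp (fun _ : V => ℂ) 2 →L[ℂ] lp (fun _ : V => ℂ) 2) : Prop :=
  ∀ f : lp (fun _ : V => ℂ) 2, ∀ v : V,
    S f v = if v = T.root then 0 else (lam v : ℂ) * f (T.par v)

/-- `M` is the (bounded, everywhere defined) multiplication operator `M_φ` with symbol `φ`;
the existence of such an `M` is equivalent to `φ ∈ 𝓜(λ)`. -/
def IsMultOp (T : DirTree V) (lam : V → ℝ) (φ : ℕ → ℂ)
    (M : lp (fun _ : V => ℂ) 2 →L[ℂ] lp (fun _ : V => ℂ) 2) : Prop :=
  ∀ f : lp (fun _ : V => ℂ) 2, ∀ v : V,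
    M f v = Gamma T (fun u => (lam u : ℂ)) φ (⇑f) v

open scoped lp

lemma lp.hasSum_norm_sq {ι : Type*} {E : ι → Type*} [∀ i, NormedAddCommGroup (E i)]
    (x : lp E 2) : HasSum (fun i => ‖x i‖ ^ 2) (‖x‖ ^ 2) := by
  simpa using lp.hasSum_norm (p := 2) (by norm_num) x

section Rotation

variable {ι : Type*} {T : ℝ}

lemma norm_fourier_apply (n : ℤ) (x : AddCircle T) : ‖fourier n x‖ = 1 := by
  rw [fourier_apply]
  exact Circle.norm_coe _

lemma memℓp_fourier_mul (d : ι → ℤ) (θ : AddCircle T) (h : ℓ²(ι, ℂ)) :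
    Memℓp (fun i => fourier (d i) θ * h i) 2 :=
  memℓp_gen <| ((lp.memℓp h).summable (by norm_num)).congr fun i => by
    rw [norm_mul, norm_fourier_apply, one_mul]

def rotate (d : ι → ℤ) (θ : AddCircle T) (h : ℓ²(ι, ℂ)) : ℓ²(ι, ℂ) :=
  ⟨fun i => fourier (d i) θ * h i, memℓp_fourier_mul d θ h⟩

@[simp]
lemma rotate_apply (d : ι → ℤ) (θ : AddCircle T) (h : ℓ²(ι, ℂ)) (i : ι) :
    rotate d θ h i = fourier (d i) θ * h i := rfl

@[simp]
lemma rotate_zero (d : ι → ℤ) (h : ℓ²(ι, ℂ)) : rotate d (0 : AddCircle T) h = h :=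
  lp.ext <| funext fun i => by simp

lemma norm_rotate (d : ι → ℤ) (θ : AddCircle T) (h : ℓ²(ι, ℂ)) : ‖rotate d θ h‖ = ‖h‖ := by
  have hsq := (lp.hasSum_norm_sq (rotate d θ h)).unique <| by
    simpa [norm_mul, Circle.norm_coe] using lp.hasSum_norm_sq h
  nlinarith [norm_nonneg (rotate d θ h), norm_nonneg h]

lemma continuous_rotate (d : ι → ℤ) (h : ℓ²(ι, ℂ)) :
    Continuous fun θ : AddCircle T => rotate d θ h := by
  rw [continuous_iff_continuousAt]
  intro θ₀
  set D : AddCircle T → ℝ :=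
    fun θ => ∑' i, ‖fourier (d i) θ - fourier (d i) θ₀‖ ^ 2 * ‖h i‖ ^ 2
  have hD : Continuous D := by
    refine continuous_tsum (fun i => by fun_prop)
      ((lp.hasSum_norm_sq h).summable.mul_left (2 ^ 2)) fun i θ => ?_
    have : ‖fourier (d i) θ - fourier (d i) θ₀‖ ≤ 2 := by
      linarith [norm_sub_le (fourier (d i) θ) (fourier (d i) θ₀), norm_fourier_apply (d i) θ,
        norm_fourier_apply (d i) θ₀]
    rw [norm_mul, norm_pow, norm_pow, norm_norm, norm_norm]
    gcongr
  have hnorm : ∀ θ, ‖rotate d θ h - rotate d θ₀ h‖ = √(D θ) := fun θ => by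
    rw [← Real.sqrt_sq (norm_nonneg _), (lp.hasSum_norm_sq _).tsum_eq.symm]
    simp [D, ← sub_mul, mul_pow]
  rw [ContinuousAt, tendsto_iff_norm_sub_tendsto_zero]
  simpa [hnorm, D] using hD.sqrt.tendsto θ₀

end Rotation

section FourierCoeff

open MeasureTheory AddCircle

variable {ι : Type*} {T : ℝ} [Fact (0 < T)]

lemma ContinuousMap.eq_zero_of_fourierCoeff_eq_zero {c : C(AddCircle T, ℂ)}
    (hc : ∀ n, fourierCoeff c n = 0) : c = 0 := by
  have hzero : fourierCoeff c = 0 := funext hc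
  have hsum := hasSum_fourier_series_of_summable (f := c) (hzero ▸ summable_zero)
  simp only [hzero, Pi.zero_apply, zero_smul] at hsum
  exact hsum.unique hasSum_zero

lemma fourierCoeff_tsum [Countable ι] {F : ι → AddCircle T → ℂ}
    (hF : ∀ i, AEStronglyMeasurable (F i) haarAddCircle) {C : ℝ}
    (hsum : ∀ θ, Summable fun i => ‖F i θ‖) (hC : ∀ θ, ∑' i, ‖F i θ‖ ≤ C) (n : ℤ) :
    fourierCoeff (fun θ => ∑' i, F i θ) n = ∑' i, fourierCoeff (F i) n := by
  simp only [fourierCoeff, smul_eq_mul, ← tsum_mul_left]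
  have hmeas : ∀ i, AEStronglyMeasurable (fun θ => fourier (-n) θ * F i θ) haarAddCircle :=
    fun i => (map_continuous _).aestronglyMeasurable.mul (hF i)
  refine integral_tsum hmeas ?_
  have henorm : ∀ θ, ∑' i, ‖fourier (-n) θ * F i θ‖ₑ = ENNReal.ofReal (∑' i, ‖F i θ‖) := by
    intro θ
    rw [ENNReal.ofReal_tsum_of_nonneg (fun _ => norm_nonneg _) (hsum θ)]
    simp only [← ofReal_norm, norm_mul, norm_fourier_apply, one_mul]
  rw [← lintegral_tsum fun i => (hmeas i).enorm]
  refine ne_top_of_le_ne_top (ENNReal.ofReal_ne_top (r := C)) ?_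
  calc ∫⁻ θ, ∑' i, ‖fourier (-n) θ * F i θ‖ₑ ∂haarAddCircle
      ≤ ∫⁻ _, ENNReal.ofReal C ∂haarAddCircle :=
        lintegral_mono fun θ => (henorm θ).le.trans (ENNReal.ofReal_le_ofReal (hC θ))
    _ = ENNReal.ofReal C := by simp

end FourierCoeff

section OrbitOrthogonal

variable {𝕜 E : Type*} [RCLike 𝕜] [NormedAddCommGroup E] [InnerProductSpace 𝕜 E]

def orbitOrthogonal (S : E →L[𝕜] E) (g : E) : Submodule 𝕜 E :=
  ⨅ k : ℕ, LinearMap.ker ((innerSL 𝕜 g).comp (S ^ k) : E →ₗ[𝕜] 𝕜)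

lemma mem_orbitOrthogonal {S : E →L[𝕜] E} {g h : E} :
    h ∈ orbitOrthogonal S g ↔ ∀ k : ℕ, inner 𝕜 ((S ^ k) h) g = 0 := by
  simp only [orbitOrthogonal, Submodule.mem_iInf, LinearMap.mem_ker, ContinuousLinearMap.coe_coe,
    ContinuousLinearMap.comp_apply, innerSL_apply_apply, inner_eq_zero_symm]

lemma isClosed_orbitOrthogonal (S : E →L[𝕜] E) (g : E) :
    IsClosed (orbitOrthogonal S g : Set E) := by
  simp only [orbitOrthogonal, Submodule.coe_iInf]
  exact isClosed_iInter fun k => ContinuousLinearMap.isClosed_ker _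

end OrbitOrthogonal

namespace DirTree

variable (T : DirTree V)

lemma depth_iterate_par_add {k : ℕ} {v : V} (hk : k ≤ T.depth v) :
    T.depth (T.par^[k] v) + k = T.depth v := by
  induction k generalizing v with
  | zero => rfl
  | succ k ih =>
    have hv : v ≠ T.root := fun h => by simp [(T.depth_eq_zero v).2 h] at hk
    have hpar := T.depth_par v hv
    have := ih (v := T.par v) (by omega)
    rw [Function.iterate_succ_apply]
    omega

end DirTree

lemma wProd_succ (T : DirTree V) (lam : V → ℂ) (v : V) (k : ℕ) :
    wProd T lam v (k + 1) = lam v * wProd T lam (T.par v) k := by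
  simp only [wProd, Finset.prod_range_succ', Function.iterate_succ_apply,
    Function.iterate_zero_apply, mul_comm]

lemma wProd_add (T : DirTree V) (lam : V → ℂ) (v : V) (k j : ℕ) :
    wProd T lam v (k + j) = wProd T lam v k * wProd T lam (T.par^[k] v) j := by
  rw [wProd, wProd, wProd, Finset.prod_range_add]
  congr 1
  refine Finset.prod_congr rfl fun i _ => ?_
  rw [add_comm k i, Function.iterate_add_apply]

namespace IsShift

variable {T : DirTree V} {lam : V → ℝ} {S : ℓ²(V, ℂ) →L[ℂ] ℓ²(V, ℂ)}

lemma pow_apply (hS : IsShift T lam S) (k : ℕ) (f : ℓ²(V, ℂ)) (v : V) :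
    (S ^ k) f v = if k ≤ T.depth v
      then wProd T (fun u => (lam u : ℂ)) v k * f (T.par^[k] v) else 0 := by
  induction k generalizing v with
  | zero => simp [wProd]
  | succ k ih =>
    rw [pow_succ', mul_apply_eq_comp, hS]
    split_ifs with hv hk hk' <;> try rfl
    · simp [hv, (T.depth_eq_zero _).2] at hk
    · have := T.depth_par v hv
      rw [ih, if_pos (by omega), wProd_succ, Function.iterate_succ_apply, mul_assoc]
    · have := T.depth_par v hv
      rw [ih, if_neg (by omega), mul_zero]

lemma isMultOp_pow (hS : IsShift T lam S) (k : ℕ) :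
    IsMultOp T lam (Pi.single k 1) (S ^ k) := by
  intro f v
  simp only [Gamma, hS.pow_apply, Pi.single_apply, mul_ite, mul_one, mul_zero, ite_mul,
    zero_mul, Finset.sum_ite_eq', Finset.mem_range, Nat.lt_succ_iff]

lemma isMultOp_pow_comp (hS : IsShift T lam S) {φ : ℕ → ℂ} {N : ℓ²(V, ℂ) →L[ℂ] ℓ²(V, ℂ)}
    (hN : IsMultOp T lam φ N) (k : ℕ) :
    IsMultOp T lam (fun m => if k ≤ m then φ (m - k) else 0) ((S ^ k).comp N) := by
  intro f v
  rw [ContinuousLinearMap.comp_apply, hS.pow_apply]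
  split_ifs with hk
  · have hsplit : T.depth v + 1 = k + (T.depth (T.par^[k] v) + 1) := by
      have := T.depth_iterate_par_add hk
      omega
    rw [hN, Gamma, Gamma, hsplit, Finset.sum_range_add _ k, Finset.mul_sum]
    have hlow : ∀ m ∈ Finset.range k, wProd T (fun u => (lam u : ℂ)) v m *
        (if k ≤ m then φ (m - k) else 0) * f (T.par^[m] v) = 0 := fun m hm => by
      rw [if_neg (by simpa using hm), mul_zero, zero_mul]
    rw [Finset.sum_eq_zero hlow, zero_add]
    refine Finset.sum_congr rfl fun j _ => ?_
    rw [if_pos (Nat.le_add_right k j), Nat.add_sub_cancel_left, wProd_add, add_comm k j,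
      Function.iterate_add_apply]
    ring
  · refine (Finset.sum_eq_zero fun m hm => ?_).symm
    dsimp only
    rw [if_neg (by simp at hm; omega), mul_zero, zero_mul]

lemma pow_rotate_apply (hS : IsShift T lam S) (k : ℕ) {p : ℝ} (θ : AddCircle p)
    (f : ℓ²(V, ℂ)) (v : V) :
    (S ^ k) (rotate (fun u => (T.depth u : ℤ)) θ f) v
      = fourier (-k) θ * rotate (fun u => (T.depth u : ℤ)) θ ((S ^ k) f) v := by
  simp only [hS.pow_apply, rotate_apply]
  split_ifs with hk
  · have hd := T.depth_iterate_par_add hk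
    rw [show (T.depth (T.par^[k] v) : ℤ) = -k + T.depth v by omega, fourier_add]
    ring
  · rw [mul_zero, mul_zero]

end IsShift

namespace IsMultOp

variable {T : DirTree V} {lam : V → ℝ} {S : ℓ²(V, ℂ) →L[ℂ] ℓ²(V, ℂ)}
  {φ : ℕ → ℂ} {N : ℓ²(V, ℂ) →L[ℂ] ℓ²(V, ℂ)} {p : ℝ}

lemma apply_eq_sum (hS : IsShift T lam S) {M : ℓ²(V, ℂ) →L[ℂ] ℓ²(V, ℂ)}
    (hM : IsMultOp T lam φ M) (f : ℓ²(V, ℂ)) (v : V) :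
    M f v = ∑ j ∈ Finset.range (T.depth v + 1), φ j * (S ^ j) f v := by
  rw [hM, Gamma]
  refine Finset.sum_congr rfl fun j hj => ?_
  rw [hS.pow_apply, if_pos (by simpa [Nat.lt_succ_iff] using hj)]
  ring

lemma conj_apply_rotate_mul (hS : IsShift T lam S) (hN : IsMultOp T lam φ N)
    (θ : AddCircle p) (f g : ℓ²(V, ℂ)) (v : V) :
    conj (N (rotate (fun u => (T.depth u : ℤ)) θ f) v) * rotate (fun u => (T.depth u : ℤ)) θ g v
      = ∑ j ∈ Finset.range (T.depth v + 1), conj (φ j * (S ^ j) f v) * g v * fourier j θ := by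
  rw [hN.apply_eq_sum hS, map_sum, Finset.sum_mul]
  refine Finset.sum_congr rfl fun j _ => ?_
  have hunit : conj (fourier (T.depth v) θ) * fourier (T.depth v) θ = 1 := by
    rw [Complex.conj_mul', norm_fourier_apply, Complex.ofReal_one, one_pow]
  simp only [hS.pow_rotate_apply, rotate_apply, map_mul, fourier_neg, Complex.conj_conj]
  linear_combination conj (φ j) * conj ((S ^ j) f v) * g v * fourier j θ * hunit

lemma fourierCoeff_conj_apply_rotate_mul [Fact (0 < p)] (hS : IsShift T lam S)
    (hN : IsMultOp T lam φ N) (f g : ℓ²(V, ℂ)) (v : V) (n : ℤ) :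
    fourierCoeff (fun θ : AddCircle p => conj (N (rotate (fun u => (T.depth u : ℤ)) θ f) v) *
        rotate (fun u => (T.depth u : ℤ)) θ g v) n
      = if 0 ≤ n then conj (φ n.toNat * (S ^ n.toNat) f v) * g v else 0 := by
  have hsum : (fun θ : AddCircle p => conj (N (rotate (fun u => (T.depth u : ℤ)) θ f) v) *
      rotate (fun u => (T.depth u : ℤ)) θ g v)
      = ∑ j ∈ Finset.range (T.depth v + 1),
          fun θ => conj (φ j * (S ^ j) f v) * g v * fourier j θ := by
    ext θ
    rw [conj_apply_rotate_mul hS hN, Finset.sum_apply]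
  rw [hsum, fourierCoeff.sum _ _ fun j _ => (map_continuous _).integrable_of_hasCompactSupport
    (.of_compactSpace _) |>.const_mul _]
  have hmonomial : ∀ j : ℕ, fourierCoeff (fun θ : AddCircle p =>
      conj (φ j * (S ^ j) f v) * g v * fourier j θ) n
        = conj (φ j * (S ^ j) f v) * g v * (Pi.single (j : ℤ) 1 : ℤ → ℂ) n := fun j => by
    rw [fourierCoeff.const_mul, fourierCoeff_fourier]
  simp only [Finset.sum_apply, hmonomial, Pi.single_apply]
  split_ifs with hn
  · obtain ⟨k, rfl⟩ := Int.eq_ofNat_of_zero_le hn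
    simp only [Int.toNat_natCast, Nat.cast_inj, mul_ite, mul_one, mul_zero,
      Finset.sum_ite_eq, Finset.mem_range, Nat.lt_succ_iff]
    split_ifs with hk
    · rfl
    · rw [hS.pow_apply, if_neg hk, mul_zero, map_zero, zero_mul]
  · exact Finset.sum_eq_zero fun j _ => by rw [if_neg (by omega), mul_zero]

lemma fourierCoeff_inner_rotate [Countable V] [Fact (0 < p)] (hS : IsShift T lam S)
    (hN : IsMultOp T lam φ N) (f g : ℓ²(V, ℂ)) (n : ℤ) :
    fourierCoeff (fun θ : AddCircle p => inner ℂ (N (rotate (fun u => (T.depth u : ℤ)) θ f))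
        (rotate (fun u => (T.depth u : ℤ)) θ g)) n
      = if 0 ≤ n then conj (φ n.toNat) * inner ℂ ((S ^ n.toNat) f) g else 0 := by
  set U : AddCircle p → ℓ²(V, ℂ) → ℓ²(V, ℂ) := rotate fun u => (T.depth u : ℤ)
  set F : V → AddCircle p → ℂ := fun v θ => conj (N (U θ f) v) * U θ g v
  have hF : ∀ v, Continuous (F v) := fun v =>
    (Complex.continuous_conj.comp <| (lp.lipschitzWith_one_eval 2 v).continuous.comp <|
      N.continuous.comp (continuous_rotate _ f)).mul
      ((lp.lipschitzWith_one_eval 2 v).continuous.comp (continuous_rotate _ g))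
  have hbound : ∀ θ, Summable (fun v => ‖F v θ‖) ∧ ∑' v, ‖F v θ‖ ≤ ‖N‖ * ‖f‖ * ‖g‖ := by
    intro θ
    have hHolder := lp.tsum_mul_le_mul_norm (p := 2) (q := 2)
      (by simpa using Real.HolderConjugate.two_two) (N (U θ f)) (U θ g)
    simp only [F, norm_mul, Complex.norm_conj]
    refine ⟨hHolder.1, hHolder.2.trans ?_⟩
    calc ‖N (U θ f)‖ * ‖U θ g‖ ≤ ‖N‖ * ‖U θ f‖ * ‖U θ g‖ := by gcongr; exact N.le_opNorm _
      _ = ‖N‖ * ‖f‖ * ‖g‖ := by simp only [U, norm_rotate]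
  have hinner : ∀ x y : ℓ²(V, ℂ), inner ℂ x y = ∑' v, conj (x v) * y v := fun x y => by
    rw [lp.inner_eq_tsum]
    exact tsum_congr fun v => by rw [RCLike.inner_apply, mul_comm]
  simp only [hinner]
  rw [fourierCoeff_tsum (fun v => (hF v).aestronglyMeasurable) (fun θ => (hbound θ).1)
    (fun θ => (hbound θ).2)]
  simp only [F, U, fourierCoeff_conj_apply_rotate_mul hS hN]
  split_ifs
  · simp only [map_mul, mul_assoc, tsum_mul_left]
  · exact tsum_zero

lemma inner_eq_zero_of_forall_inner_pow_eq_zero [Countable V] (hS : IsShift T lam S)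
    (hN : IsMultOp T lam φ N) {f g : ℓ²(V, ℂ)} (hfg : ∀ k : ℕ, inner ℂ ((S ^ k) f) g = 0) :
    inner ℂ (N f) g = 0 := by
  have : Fact ((0 : ℝ) < 1) := ⟨one_pos⟩
  let c : C(AddCircle (1 : ℝ), ℂ) :=
    ⟨fun θ => inner ℂ (N (rotate (fun u => (T.depth u : ℤ)) θ f))
      (rotate (fun u => (T.depth u : ℤ)) θ g),
      (N.continuous.comp (continuous_rotate _ f)).inner (continuous_rotate _ g)⟩
  have hc : c = 0 := ContinuousMap.eq_zero_of_fourierCoeff_eq_zero fun n => by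
    rw [ContinuousMap.coe_mk, fourierCoeff_inner_rotate hS hN]
    split_ifs
    · rw [hfg, mul_zero]
    · rfl
  simpa [c] using DFunLike.congr_fun hc 0

end IsMultOp

theorem stmt8_general [Countable V] (T : DirTree V)
    (lam : V → ℝ)
    (S : lp (fun _ : V => ℂ) 2 →L[ℂ] lp (fun _ : V => ℂ) 2) (hS : IsShift T lam S) :
    ∀ A : lp (fun _ : V => ℂ) 2 →L[ℂ] lp (fun _ : V => ℂ) 2,
      ((∀ K : Submodule ℂ (lp (fun _ : V => ℂ) 2),
          IsClosed (K : Set (lp (fun _ : V => ℂ) 2)) →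
          (∀ φ : ℕ → ℂ, ∀ M : lp (fun _ : V => ℂ) 2 →L[ℂ] lp (fun _ : V => ℂ) 2,
            IsMultOp T lam φ M → ∀ f ∈ K, M f ∈ K) →
          ∀ f ∈ K, A f ∈ K) ↔
        (∀ f g : lp (fun _ : V => ℂ) 2,
          (∀ φ : ℕ → ℂ, ∀ M : lp (fun _ : V => ℂ) 2 →L[ℂ] lp (fun _ : V => ℂ) 2,
            (Function.support φ).Finite → IsMultOp T lam φ M → (inner ℂ (M f) g : ℂ) = 0) →
          (inner ℂ (A f) g : ℂ) = 0)) := by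
  intro A
  constructor
  · intro hA f g hfg
    have hf : f ∈ orbitOrthogonal S g := mem_orbitOrthogonal.2 fun k =>
      hfg _ _ ((Set.finite_singleton k).subset Pi.support_single_subset) (hS.isMultOp_pow k)
    have hinv : ∀ φ M, IsMultOp T lam φ M → ∀ h ∈ orbitOrthogonal S g, M h ∈ orbitOrthogonal S g :=
      fun _ _ hM _ hh => mem_orbitOrthogonal.2 fun k =>
        (hS.isMultOp_pow_comp hM k).inner_eq_zero_of_forall_inner_pow_eq_zero hS (mem_orbitOrthogonal.1 hh)
    simpa using mem_orbitOrthogonal.1 (hA _ (isClosed_orbitOrthogonal S g) hinv f hf) 0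
  · intro hA K hK hinv f hf
    have : CompleteSpace K := hK.completeSpace_coe
    rw [← K.orthogonal_orthogonal, Submodule.mem_orthogonal']
    exact fun g hg => hA f g fun φ M _ hM =>
      Submodule.inner_right_of_mem_orthogonal (hinv φ M hM f hf) hg

/-- Proposition, second part: `Alg Lat ℳ(λ)` consists exactly of the
bounded operators `A` such that for all `f, g`: if `⟨M_φ f, g⟩ = 0` for every finitely
supported `φ ∈ 𝓜₀(λ)`, then `⟨A f, g⟩ = 0`. -/
theorem stmt8 [Countable V] [Infinite V] (T : DirTree V) (hTl : T.Leafless)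
    (lam : V → ℝ) (hlam : ∀ v, v ≠ T.root → 0 < lam v)
    (S : lp (fun _ : V => ℂ) 2 →L[ℂ] lp (fun _ : V => ℂ) 2) (hS : IsShift T lam S) :
    ∀ A : lp (fun _ : V => ℂ) 2 →L[ℂ] lp (fun _ : V => ℂ) 2,
      ((∀ K : Submodule ℂ (lp (fun _ : V => ℂ) 2),
          IsClosed (K : Set (lp (fun _ : V => ℂ) 2)) →
          (∀ φ : ℕ → ℂ, ∀ M : lp (fun _ : V => ℂ) 2 →L[ℂ] lp (fun _ : V => ℂ) 2,
            IsMultOp T lam φ M → ∀ f ∈ K, M f ∈ K) →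
          ∀ f ∈ K, A f ∈ K) ↔
        (∀ f g : lp (fun _ : V => ℂ) 2,
          (∀ φ : ℕ → ℂ, ∀ M : lp (fun _ : V => ℂ) 2 →L[ℂ] lp (fun _ : V => ℂ) 2,
            (Function.support φ).Finite → IsMultOp T lam φ M → (inner ℂ (M f) g : ℂ) = 0) →
          (inner ℂ (A f) g : ℂ) = 0)) :=
  stmt8_general T lam S hS
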